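/- The map Φ_p with p = (1, 1, −1), i.e. Φ(X) = Φ₁(X) + Φ₂(X) − Φ₃(X) where Φₖ(X) = ½(σₖ X σₖ + X), is unital and positive, but it does not satisfy the Kadison–Schwarz inequality: for X = E₁₂ one has Φ(Xᴴ X) = E₁₁ and Φ(Xᴴ)Φ(X) = E₂₂, so Φ(Xᴴ X) − Φ(Xᴴ)Φ(X) is not positive semidefinite. -/

import Mathlib

open Matrix
open scoped ComplexOrder

/-- The three Pauli matrices in `M₂(ℂ)`. -/
def pauli : Fin 3 → Matrix (Fin 2) (Fin 2) ℂ
  | 0 => !![0, 1; 1, 0]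
  | 1 => !![0, -Complex.I; Complex.I, 0]
  | 2 => !![1, 0; 0, -1]

/-- `Φₖ(X) = ½ (σₖ X σₖ + X)`. -/
noncomputable def PhiK (k : Fin 3) (X : Matrix (Fin 2) (Fin 2) ℂ) :
    Matrix (Fin 2) (Fin 2) ℂ :=
  (1 / 2 : ℂ) • (pauli k * X * pauli k + X)

/-- `Φ = Φ₁ + Φ₂ − Φ₃`, i.e. the map `Φ_p` with `p = (1, 1, −1)`. -/
noncomputable def PhiExample (X : Matrix (Fin 2) (Fin 2) ℂ) :
    Matrix (Fin 2) (Fin 2) ℂ :=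
  PhiK 0 X + PhiK 1 X - PhiK 2 X

/-!
`Φ(A) = σ₁ Aᵀ σ₁` is the transpose of `A` with both indices reversed. Transposition and a
simultaneous permutation of rows and columns preserve positivity and the identity, but
transposition reverses products, so `Φ(Xᴴ) Φ(X) = Φ(X Xᴴ)`; for `X = E₁₂` this is `Φ(E₁₁) = E₂₂`,
whereas `Φ(Xᴴ X) = Φ(E₂₂) = E₁₁`.
-/

theorem phiExample_eq_submatrix_transpose (A : Matrix (Fin 2) (Fin 2) ℂ) :
    PhiExample A = Aᵀ.submatrix Fin.revPerm Fin.revPerm := by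
  ext i j
  fin_cases i <;> fin_cases j <;>
    simp [PhiExample, PhiK, pauli, mul_apply, Fin.sum_univ_two, vecMul, dotProduct] <;>
    ring_nf <;> simp [Complex.I_sq] <;> ring

theorem submatrix_transpose_mul_submatrix_transpose {n α : Type*} [Fintype n] [CommSemiring α]
    (e : Equiv.Perm n) (A B : Matrix n n α) :
    Aᵀ.submatrix e e * Bᵀ.submatrix e e = (B * A)ᵀ.submatrix e e := by
  rw [submatrix_mul_equiv, transpose_mul]

theorem phiExample_mul_phiExample (A B : Matrix (Fin 2) (Fin 2) ℂ) :
    PhiExample A * PhiExample B = PhiExample (B * A) := by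
  simp only [phiExample_eq_submatrix_transpose, submatrix_transpose_mul_submatrix_transpose]

theorem phiExample_single (i j : Fin 2) (c : ℂ) :
    PhiExample (single i j c) = single j.rev i.rev c := by
  simp [phiExample_eq_submatrix_transpose]

theorem phiExample_one : PhiExample 1 = 1 := by
  simp [phiExample_eq_submatrix_transpose]

theorem posSemidef_phiExample {A : Matrix (Fin 2) (Fin 2) ℂ} (hA : A.PosSemidef) :
    (PhiExample A).PosSemidef := by
  rw [phiExample_eq_submatrix_transpose]
  exact hA.transpose.submatrix _

/-- `Φ = Φ₁ + Φ₂ − Φ₃` is unital and positive, but for `X = E₁₂`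
one has `Φ(Xᴴ X) = E₁₁` and `Φ(Xᴴ)Φ(X) = E₂₂`, and `E₁₁ − E₂₂` is not positive
semidefinite, so `Φ` violates the Kadison–Schwarz inequality. -/
theorem stmt_8 :
    PhiExample 1 = 1 ∧
    (∀ A : Matrix (Fin 2) (Fin 2) ℂ, A.PosSemidef → (PhiExample A).PosSemidef) ∧
    (PhiExample ((Matrix.single 0 1 1 : Matrix (Fin 2) (Fin 2) ℂ)ᴴ *
        Matrix.single 0 1 1) = Matrix.single 0 0 1) ∧
    (PhiExample ((Matrix.single 0 1 1 : Matrix (Fin 2) (Fin 2) ℂ)ᴴ) *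
        PhiExample (Matrix.single 0 1 1) = Matrix.single 1 1 1) ∧
    ¬ (Matrix.single 0 0 1 - Matrix.single 1 1 1 :
        Matrix (Fin 2) (Fin 2) ℂ).PosSemidef := by
  refine ⟨phiExample_one, fun _ hA ↦ posSemidef_phiExample hA, ?_, ?_, fun h ↦ ?_⟩
  · simp [phiExample_single]
  · rw [phiExample_mul_phiExample]
    simp [phiExample_single]
  · have h₁₁ := h.diag_nonneg (i := 1)
    norm_num at h₁₁
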